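/- arXiv:2504.21341 — 3 statements merged into one kernel-verified Lean document; each statement's English description precedes it below -/
import Mathlib

section
/- Let A ∈ ℝ^{n×n}, B ∈ ℝ^{n×m}, C ∈ ℝ^{p×n}, and K_P ∈ ℝ^{m×p}, and suppose that A_K := A − B K_P C is invertible. Then the block matrix [[A, B], [C, 0]] ∈ ℝ^{(n+p)×(n+m)} has rank n + p if and only if the matrix C A_K^{-1} B ∈ ℝ^{p×m} has rank p (full row rank). -/
/-!
Right-multiplying `[[A, B], [C, 0]]` by the unimodular matrix `[[1, 0], [-K_P C, 1]]` turns it into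
`[[A_K, B], [C, 0]]` without changing the rank. Since `A_K` is invertible, the Schur complement
factorization of this matrix gives Guttman's rank additivity
`rank [[A_K, B], [C, 0]] = n + rank (-C A_K⁻¹ B)`, so the rank is `n + p` exactly when the
steady-state gain has rank `p`.
-/

open Matrix Module

theorem LinearMap.finrank_range_prodMap {K M₁ M₂ N₁ N₂ : Type*} [DivisionRing K]
    [AddCommGroup M₁] [AddCommGroup M₂] [AddCommGroup N₁] [AddCommGroup N₂]
    [Module K M₁] [Module K M₂] [Module K N₁] [Module K N₂]
    [FiniteDimensional K N₁] [FiniteDimensional K N₂] (f : M₁ →ₗ[K] N₁) (g : M₂ →ₗ[K] N₂) :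
    finrank K (range (f.prodMap g)) = finrank K (range f) + finrank K (range g) := by
  have hfactor : f.prodMap g =
      (f.range.subtype.prodMap g.range.subtype) ∘ₗ (f.rangeRestrict.prodMap g.rangeRestrict) :=
    rfl
  have hsurj : range (f.rangeRestrict.prodMap g.rangeRestrict) = ⊤ := by
    rw [range_prodMap, range_rangeRestrict, range_rangeRestrict, Submodule.prod_top]
  rw [hfactor, range_comp_of_range_eq_top _ hsurj,
    finrank_range_of_inj (Prod.map_injective.mpr ⟨Subtype.val_injective, Subtype.val_injective⟩),
    finrank_prod]

namespace Matrix

variable {R K l m n o : Type*} [CommRing R] [Field K]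

theorem rank_neg [Fintype n] (A : Matrix m n R) : (-A).rank = A.rank := by
  rw [← neg_one_smul R A]
  exact rank_smul_of_mem_nonZeroDivisors A isUnit_one.neg.mem_nonZeroDivisors

theorem rank_fromBlocks_sub_mul [Fintype m] [Fintype n] [DecidableEq m] [DecidableEq n]
    (A : Matrix l m R) (B : Matrix l n R) (C : Matrix o m R) (D : Matrix o n R)
    (X : Matrix n m R) :
    (fromBlocks (A - B * X) B (C - D * X) D).rank = (fromBlocks A B C D).rank := by
  have hcolumnOps : fromBlocks A B C D * (fromBlocks 1 0 (-X) 1 : Matrix (m ⊕ n) (m ⊕ n) R) =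
      fromBlocks (A - B * X) B (C - D * X) D := by
    rw [fromBlocks_multiply]
    simp [sub_eq_add_neg]
  rw [← hcolumnOps]
  exact rank_mul_eq_left_of_isUnit_det _ _ (by simp)

theorem mulVecLin_fromBlocks_zero_zero [Fintype m] [Fintype o]
    (A : Matrix l m K) (D : Matrix n o K) :
    (fromBlocks A 0 0 D).mulVecLin =
      (LinearEquiv.sumArrowLequivProdArrow l n K K).symm.toLinearMap ∘ₗ
        A.mulVecLin.prodMap D.mulVecLin ∘ₗ
          (LinearEquiv.sumArrowLequivProdArrow m o K K).toLinearMap := by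
  ext v (i | i) <;> simp [fromBlocks_mulVec] <;> rfl

theorem rank_fromBlocks_zero_zero [Fintype l] [Fintype m] [Fintype n] [Fintype o]
    (A : Matrix l m K) (D : Matrix n o K) :
    (fromBlocks A 0 0 D).rank = A.rank + D.rank := by
  rw [rank, mulVecLin_fromBlocks_zero_zero, LinearMap.range_comp, LinearEquiv.range_comp,
    LinearEquiv.finrank_map_eq, LinearMap.finrank_range_prodMap, rank, rank]

theorem rank_fromBlocks_of_isUnit₁₁ [Fintype l] [Fintype m] [Fintype n]
    [DecidableEq l] [DecidableEq m] [DecidableEq n]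
    (A : Matrix m m K) (B : Matrix m n K) (C : Matrix l m K) (D : Matrix l n K)
    (hA : IsUnit A) :
    (fromBlocks A B C D).rank = Fintype.card m + (D - C * A⁻¹ * B).rank := by
  obtain ⟨_⟩ := hA.nonempty_invertible
  rw [fromBlocks_eq_of_invertible₁₁ A, invOf_eq_nonsing_inv,
    rank_mul_eq_left_of_isUnit_det _ _ (by simp),
    rank_mul_eq_right_of_isUnit_det _ _ (by simp),
    rank_fromBlocks_zero_zero, rank_of_isUnit A hA]

end Matrix

/-- With `A_K := A − B K_P C` invertible, the block matrix
`[[A, B], [C, 0]]` has full row rank `n + p` if and only if the steady-state gain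
matrix `C A_K⁻¹ B` has full row rank `p`. -/
theorem fullRowRank_blocks_iff_steadyStateGain (n m p : ℕ)
    (A : Matrix (Fin n) (Fin n) ℝ) (B : Matrix (Fin n) (Fin m) ℝ)
    (C : Matrix (Fin p) (Fin n) ℝ) (KP : Matrix (Fin m) (Fin p) ℝ)
    (hAK : IsUnit (A - B * KP * C)) :
    (Matrix.fromBlocks A B C 0).rank = n + p ↔
      (C * (A - B * KP * C)⁻¹ * B).rank = p := by
  have hrank : (Matrix.fromBlocks A B C 0).rank = n + (C * (A - B * KP * C)⁻¹ * B).rank := by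
    rw [← rank_fromBlocks_sub_mul A B C 0 (KP * C), Matrix.zero_mul, sub_zero, ← Matrix.mul_assoc,
      rank_fromBlocks_of_isUnit₁₁ _ _ _ _ hAK, zero_sub, rank_neg, Fintype.card_fin]
  omega
end

section
/- Let A ∈ ℝ^{n×n} and f > 0 be such that vᵀ A v ≤ −f ‖v‖² for all v ∈ ℝ^n (i.e., the symmetric part of A satisfies (A + Aᵀ)/2 ⪯ −f I). Let X, M ∈ ℝ^{n×n} be symmetric matrices satisfying the Lyapunov equation A X + X Aᵀ + M = 0. Then ‖X‖₂ ≤ ‖M‖₂ / (2f), where ‖·‖₂ denotes the spectral norm. -/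
/-!
Since the spectral radius of a self-adjoint operator equals its norm, `X` has a unit eigenvector
`u` whose eigenvalue `μ` satisfies `|μ| = ‖X‖`. Testing the Lyapunov equation against `u` gives
`⟪M u, u⟫ = -2 μ ⟪A u, u⟫`, and `-⟪A u, u⟫ ≥ f`, so `2 f ‖X‖ ≤ |⟪M u, u⟫| ≤ ‖M‖`.
-/

open Matrix

/-- Euclidean norm of a vector. -/
noncomputable def vnorm {ι : Type*} [Fintype ι] (v : ι → ℝ) : ℝ :=
  Real.sqrt (∑ i, v i ^ 2)

/-- Spectral (ℓ²-operator) norm of a real matrix. -/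
noncomputable def matSpectralNorm {ι κ : Type*} [Fintype ι] [Fintype κ]
    (M : Matrix ι κ ℝ) : ℝ :=
  ⨆ v : {v : κ → ℝ // vnorm v ≤ 1}, vnorm (M.mulVec v.1)

open scoped RealInnerProductSpace ENNReal
open ContinuousLinearMap

section Operator

variable {E : Type*} [NormedAddCommGroup E] [InnerProductSpace ℝ E]

theorem IsSelfAdjoint.exists_eigenvector_abs_eq_norm [FiniteDimensional ℝ E] [Nontrivial E]
    {T : E →L[ℝ] E} (hT : IsSelfAdjoint T) :
    ∃ μ : ℝ, ∃ u : E, ‖u‖ = 1 ∧ T u = μ • u ∧ |μ| = ‖T‖ := by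
  have hρ : spectralRadius ℝ T = ‖T‖₊ := T.spectralRadius_eq_nnnorm hT
  have hσ : (spectrum ℝ T).Nonempty := by
    by_contra hempty
    rw [Set.not_nonempty_iff_eq_empty] at hempty
    have hT0 : T = 0 := by
      simpa [spectralRadius, hempty, eq_comm (a := (0 : ℝ≥0∞))] using hρ
    simp [hT0, spectrum.zero_eq] at hempty
  obtain ⟨μ, hμσ, hμ⟩ := spectrum.exists_nnnorm_eq_spectralRadius_of_nonempty hσ
  rw [spectrum_eq, ← Module.End.hasEigenvalue_iff_mem_spectrum] at hμσ
  obtain ⟨v, hv⟩ := hμσ.exists_hasEigenvector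
  have hv0 : ‖v‖ ≠ 0 := norm_ne_zero_iff.mpr hv.2
  refine ⟨μ, ‖v‖⁻¹ • v, by simp [norm_smul, hv0], ?_, ?_⟩
  · rw [map_smul, smul_comm, ← hv.apply_eq_smul, coe_coe]
  · rw [hρ, ENNReal.coe_inj] at hμ
    exact congrArg NNReal.toReal hμ

theorem ContinuousLinearMap.inner_apply_self_of_lyapunov [CompleteSpace E] {A X M : E →L[ℝ] E}
    (hX : IsSelfAdjoint X) (hLyap : A * X + X * adjoint A + M = 0) {μ : ℝ} {u : E}
    (hu : X u = μ • u) : ⟪M u, u⟫ = -(2 * μ * ⟪A u, u⟫) := by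
  have hM : M = -(A * X + X * adjoint A) := eq_neg_of_add_eq_zero_right hLyap
  have hXA : ⟪X (adjoint A u), u⟫ = μ * ⟪A u, u⟫ := by
    rw [← adjoint_inner_right, hX.adjoint_eq, hu, inner_smul_right, adjoint_inner_left,
      real_inner_comm]
  rw [hM, _root_.neg_apply, _root_.add_apply, inner_neg_left, inner_add_left, mul_apply_eq_comp,
    mul_apply_eq_comp, hXA, hu, map_smul, real_inner_smul_left]
  ring

theorem ContinuousLinearMap.two_mul_mul_norm_le_of_lyapunov [FiniteDimensional ℝ E]
    {A X M : E →L[ℝ] E} {f : ℝ} (hA : ∀ v, ⟪A v, v⟫ ≤ -f * ‖v‖ ^ 2) (hX : IsSelfAdjoint X)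
    (hLyap : A * X + X * adjoint A + M = 0) : 2 * f * ‖X‖ ≤ ‖M‖ := by
  nontriviality E
  obtain ⟨μ, u, hu1, hXu, hμ⟩ := hX.exists_eigenvector_abs_eq_norm
  have hAu : f ≤ |⟪A u, u⟫| := by
    have := hA u
    rw [hu1] at this
    linarith [neg_abs_le ⟪A u, u⟫]
  calc 2 * f * ‖X‖ ≤ 2 * |μ| * |⟪A u, u⟫| := by
        rw [← hμ]; nlinarith [abs_nonneg μ]
    _ = |⟪M u, u⟫| := by
        rw [inner_apply_self_of_lyapunov hX hLyap hXu, abs_neg, abs_mul, abs_mul, abs_two]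
    _ ≤ ‖M u‖ * ‖u‖ := abs_real_inner_le_norm _ _
    _ ≤ ‖M‖ := by
        rw [hu1, mul_one]
        exact M.unit_le_opNorm u hu1.le

end Operator

section Matrix

variable {ι : Type*} [Fintype ι]

theorem vnorm_eq_norm_toLp (v : ι → ℝ) : vnorm v = ‖WithLp.toLp 2 v‖ := by
  simp [vnorm, EuclideanSpace.norm_eq]

theorem matSpectralNorm_eq_norm_toEuclideanCLM [DecidableEq ι] (M : Matrix ι ι ℝ) :
    matSpectralNorm M = ‖toEuclideanCLM (𝕜 := ℝ) M‖ := by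
  set T := toEuclideanCLM (𝕜 := ℝ) M
  have hT (v : ι → ℝ) (hv : vnorm v ≤ 1) : vnorm (M *ᵥ v) ≤ ‖T‖ := by
    rw [vnorm_eq_norm_toLp] at hv ⊢
    exact T.unit_le_opNorm _ hv
  have hbdd : BddAbove (Set.range fun v : {v : ι → ℝ // vnorm v ≤ 1} ↦ vnorm (M *ᵥ v.1)) :=
    ⟨‖T‖, Set.forall_mem_range.2 fun v ↦ hT v.1 v.2⟩
  have hM (v : ι → ℝ) (hv : vnorm v ≤ 1) : vnorm (M *ᵥ v) ≤ matSpectralNorm M :=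
    le_ciSup hbdd (⟨v, hv⟩ : {v : ι → ℝ // vnorm v ≤ 1})
  have h0 : vnorm (0 : ι → ℝ) ≤ 1 := by simp [vnorm]
  have : Nonempty {v : ι → ℝ // vnorm v ≤ 1} := ⟨⟨0, h0⟩⟩
  refine le_antisymm (ciSup_le fun v ↦ hT v.1 v.2) (opNorm_le_of_unit_norm ?_ fun x hx ↦ ?_)
  · simpa [vnorm] using hM 0 h0
  · have := hM x.ofLp (by simp [vnorm_eq_norm_toLp, hx])
    rwa [vnorm_eq_norm_toLp, ← toEuclideanCLM_toLp, WithLp.toLp_ofLp] at this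

end Matrix

theorem lyapunov_solution_bound_general (n : ℕ) (A X M : Matrix (Fin n) (Fin n) ℝ)
    (f : ℝ) (hf : 0 < f)
    (hA : ∀ v : Fin n → ℝ, v ⬝ᵥ A.mulVec v ≤ -f * vnorm v ^ 2)
    (hX : X.IsSymm)
    (hLyap : A * X + X * Aᵀ + M = 0) :
    matSpectralNorm X ≤ matSpectralNorm M / (2 * f) := by
  set T := toEuclideanCLM (n := Fin n) (𝕜 := ℝ)
  have hA' : ∀ v, ⟪T A v, v⟫ ≤ -f * ‖v‖ ^ 2 := fun v ↦ by
    simpa [real_inner_comm, T, inner_toEuclideanCLM, vnorm_eq_norm_toLp] using hA v.ofLp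
  have hX' : IsSelfAdjoint (T X) := (isHermitian_iff_isSymm.2 hX).isSelfAdjoint.map T
  have hLyap' : T A * T X + T X * adjoint (T A) + T M = 0 := by
    rw [← star_eq_adjoint, ← map_star, star_eq_conjTranspose, conjTranspose_eq_transpose_of_trivial,
      ← map_mul, ← map_mul, ← map_add, ← map_add, hLyap, map_zero]
  rw [matSpectralNorm_eq_norm_toEuclideanCLM, matSpectralNorm_eq_norm_toEuclideanCLM,
    le_div_iff₀ (by positivity)]
  linarith [two_mul_mul_norm_le_of_lyapunov hA' hX' hLyap']

/-- If the symmetric part of `A` is bounded above by `−f I`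
(in the quadratic-form sense) and the symmetric matrices `X, M` satisfy the
Lyapunov equation `A X + X Aᵀ + M = 0`, then `‖X‖₂ ≤ ‖M‖₂ / (2 f)`. -/
theorem lyapunov_solution_bound (n : ℕ) (A X M : Matrix (Fin n) (Fin n) ℝ)
    (f : ℝ) (hf : 0 < f)
    (hA : ∀ v : Fin n → ℝ, v ⬝ᵥ A.mulVec v ≤ -f * vnorm v ^ 2)
    (hX : X.IsSymm) (hM : M.IsSymm)
    (hLyap : A * X + X * Aᵀ + M = 0) :
    matSpectralNorm X ≤ matSpectralNorm M / (2 * f) :=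
  lyapunov_solution_bound_general n A X M f hf hA hX hLyap
end

section
/- Define f(K_P, K_I) := ((K_I + 1)(0.5 K_I + K_P² K_I + 1)) / (K_I (K_P − 0.1)) + (K_P − 0.1) / (2 K_I) + K_P for real K_P > 0.1 and K_I > 0. Then f(1, 4) + f(4, 1.6) < 2 · f(2.5, 2.8); in particular f is not convex on the convex set {(K_P, K_I) : K_P > 0.1, K_I > 0}. -/
/-- The scalar-example PI cost from Appendix A of the paper. -/
noncomputable def piCost (KP KI : ℝ) : ℝ :=
  ((KI + 1) * (0.5 * KI + KP ^ 2 * KI + 1)) / (KI * (KP - 0.1)) +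
    (KP - 0.1) / (2 * KI) + KP

/-- The midpoint-convexity inequality fails for the cost
`piCost` at `K¹ = (1, 4)` and `K² = (4, 1.6)`; in particular `piCost` is not
convex on the convex set `{(K_P, K_I) : K_P > 0.1, K_I > 0}`. -/
theorem piCost_not_convex :
    piCost 1 4 + piCost 4 1.6 < 2 * piCost 2.5 2.8 ∧
    ¬ ConvexOn ℝ {q : ℝ × ℝ | 0.1 < q.1 ∧ 0 < q.2}
        (fun q : ℝ × ℝ => piCost q.1 q.2) := by
  have hineq : piCost 1 4 + piCost 4 1.6 < 2 * piCost 2.5 2.8 := by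
    unfold piCost; norm_num
  refine ⟨hineq, fun h => ?_⟩
  have h1 : ((1 : ℝ), (4 : ℝ)) ∈ {q : ℝ × ℝ | 0.1 < q.1 ∧ 0 < q.2} := by norm_num
  have h2 : ((4 : ℝ), (1.6 : ℝ)) ∈ {q : ℝ × ℝ | 0.1 < q.1 ∧ 0 < q.2} := by norm_num
  have := h.2 h1 h2 (by norm_num : (0:ℝ) ≤ (1/2:ℝ)) (by norm_num : (0:ℝ) ≤ (1/2:ℝ))
    (by norm_num : (1/2:ℝ) + 1/2 = 1)
  have heq : (1/2 : ℝ) • ((1:ℝ),(4:ℝ)) + (1/2 : ℝ) • ((4:ℝ),(1.6:ℝ)) = ((2.5:ℝ),(2.8:ℝ)) := by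
    simp [Prod.ext_iff]; norm_num
  rw [heq] at this
  simp only [smul_eq_mul] at this
  linarith
end
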